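/- If a right path from D_μ to D_λ exists, then the set of right paths from D_μ to D_λ contains a unique path of maximal length, namely the 'trivial path' which moves the i-th ∨ of D_μ to the position of the i-th ∨ of D_λ for every i. -/

import Mathlib

/-! ## Weight diagrams, cap diagrams and right paths (Brundan–Stroppel / Brundan),
as used in "A Weyl-type character formula for PDC modules of gl(m|n)". -/

/-- The symbols of a weight diagram: `∨`, `∧`, `×`, `∘`. -/
inductive Tag : Type
  | vee | wedge | ex | circ
  deriving DecidableEq

/-- A weight diagram: a function `ℤ → {∨,∧,×,∘}` with finitely many non-`∧` entries. -/
structure WDiag : Type where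
  D : ℤ → Tag
  finite : {t : ℤ | D t ≠ Tag.wedge}.Finite

namespace WDiag

/-- The (finite) set of positions of `∨`'s. -/
noncomputable def veeFinset (W : WDiag) : Finset ℤ :=
  W.finite.toFinset.filter (fun t => W.D t = Tag.vee)

/-- The position of the `i`-th `∨`, counted from the left starting with `i = 0`
(junk value if `i` is out of range). -/
noncomputable def nthVee (W : WDiag) (i : ℕ) : ℤ :=
  (W.veeFinset.sort (· ≤ ·)).getD i 0

/-- In the open interval `(p,q)` there are as many `∨`'s as `∧`'s. -/
def capBal (W : WDiag) (p q : ℤ) : Prop :=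
  ((Finset.Ioo p q).filter (fun t => W.D t = Tag.vee)).card =
    ((Finset.Ioo p q).filter (fun t => W.D t = Tag.wedge)).card

/-- `(p,q)` is a cap of the cap diagram of `W`: `p` carries `∨`, `q` is the first `∧` to the
right of `p` such that the `∨`'s and `∧`'s strictly between `p` and `q` pair off.  This
balance condition characterizes the matching obtained by processing the `∨`'s right to left,
joining each `∨` to the first unmarked `∧` to its right. -/
def IsCap (W : WDiag) (p q : ℤ) : Prop :=
  W.D p = Tag.vee ∧ W.D q = Tag.wedge ∧ p < q ∧ W.capBal p q ∧
    ∀ q', p < q' → q' < q → W.D q' = Tag.wedge → ¬ W.capBal p q'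

/-- Cap `(p,q)` is nested (strictly) below cap `(p',q')`. -/
def CapBelow (p q p' q' : ℤ) : Prop := p' < p ∧ q < q'

/-- The diagram obtained by exchanging the `∨` at `p` with the `∧` at `q`. -/
noncomputable def moveDiag (W : WDiag) (p q : ℤ) : WDiag where
  D := fun t => if t = p then Tag.wedge else if t = q then Tag.vee else W.D t
  finite := by
    classical
    refine Set.Finite.subset (W.finite.union (Set.toFinite {p, q})) ?_
    intro t ht
    by_cases h1 : t = p
    · exact Or.inr (by simp [h1])
    · by_cases h2 : t = q
      · exact Or.inr (by simp [h2])
      · left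
        simpa [Set.mem_setOf_eq, h1, h2] using ht

/-- The right move `R_i` (as a relation): exchange the `i`-th `∨` (counted from the left,
`0`-based) with the `∧` to which it is joined by a cap. -/
def RMove (i : ℕ) (W W' : WDiag) : Prop :=
  i < W.veeFinset.card ∧ ∃ q, W.IsCap (W.nthVee i) q ∧ W' = W.moveDiag (W.nthVee i) q

/-- `PathRel l W W'`: applying the right moves recorded in `l` (head first) turns `W`
into `W'`. -/
def PathRel : List ℕ → WDiag → WDiag → Prop
  | [], W, W' => W = W'
  | i :: l, W, W' => ∃ E, RMove i W E ∧ PathRel l E W'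

/-- `l` is a right path from `W` to `W'`: a sequence of right moves
`R_{i₁} ∘ ⋯ ∘ R_{i_k}` with `i₁ ≤ … ≤ i_k`.  Since the composition is applied rightmost
factor first, the list of moves in order of application is weakly decreasing. -/
def IsRightPath (W W' : WDiag) (l : List ℕ) : Prop :=
  l.Chain' (fun a b => b ≤ a) ∧ PathRel l W W'

/-- `W` and `W'` have the same typical entries (`×`'s and `∘`'s). -/
def SameTypical (W W' : WDiag) : Prop :=
  ∀ t, (W.D t = Tag.ex ↔ W'.D t = Tag.ex) ∧ (W.D t = Tag.circ ↔ W'.D t = Tag.circ)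

/-- Totally connected: between any two `∨`'s there is no `∧`. -/
def TC (W : WDiag) : Prop :=
  ∀ p q t, W.D p = Tag.vee → W.D q = Tag.vee → p < t → t < q → W.D t ≠ Tag.wedge

/-- Totally disconnected: between any two `∨`'s there is at least one `∧`. -/
def TDC (W : WDiag) : Prop :=
  ∀ p q, W.D p = Tag.vee → W.D q = Tag.vee → p < q → ∃ t, p < t ∧ t < q ∧ W.D t = Tag.wedge

/-- `[a,b]` is an atypical component: a maximal nonempty interval containing a `∨` and
no `∧` (maximality amounts to `∧`'s at the two positions just outside). -/
def IsComp (W : WDiag) (a b : ℤ) : Prop :=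
  a ≤ b ∧ (∀ t ∈ Finset.Icc a b, W.D t ≠ Tag.wedge) ∧ (∃ t ∈ Finset.Icc a b, W.D t = Tag.vee)
    ∧ W.D (a - 1) = Tag.wedge ∧ W.D (b + 1) = Tag.wedge

/-- Piecewise disconnected (PDC): for any two consecutive atypical components `T_i = [a,b]`,
`T_{i+1} = [a',b']` (no atypical component strictly between them), the number `t_i` of `∨`'s
in `T_i` is at most the number `s_i` of `∧`'s strictly between `T_i` and `T_{i+1}`. -/
def PDC (W : WDiag) : Prop :=
  ∀ a b a' b', W.IsComp a b → W.IsComp a' b' → b < a' →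
    (∀ a'' b'', W.IsComp a'' b'' → ¬(b < a'' ∧ b'' < a')) →
    ((Finset.Icc a b).filter (fun t => W.D t = Tag.vee)).card ≤
      ((Finset.Ioo b a').filter (fun t => W.D t = Tag.wedge)).card

/-- Positions `x` and `y` lie in the same atypical component: no `∧` in between
(inclusively). -/
def SameComp (W : WDiag) (x y : ℤ) : Prop :=
  ∀ t ∈ Finset.Icc (min x y) (max x y), W.D t ≠ Tag.wedge

/-- A labeled right move on a diagram with `r` labeled `∨`'s (the function `Fin r → ℤ`
records the current position of each labeled `∨`): the move `R_i` moves the label currently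
occupying the position of the `i`-th `∨`. -/
def LMove (r : ℕ) (i : ℕ) (S S' : WDiag × (Fin r → ℤ)) : Prop :=
  ∃ (k : Fin r) (q : ℤ), S.2 k = S.1.nthVee i ∧ i < S.1.veeFinset.card ∧
    S.1.IsCap (S.2 k) q ∧ S'.1 = S.1.moveDiag (S.2 k) q ∧ S'.2 = Function.update S.2 k q

/-- Labeled version of `PathRel`. -/
def LPathRel (r : ℕ) : List ℕ → WDiag × (Fin r → ℤ) → WDiag × (Fin r → ℤ) → Prop
  | [], S, S' => S = S'
  | i :: l, S, S' => ∃ E, LMove r i S E ∧ LPathRel r l E S'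

/-- The path `l` from `Wmu` to `Wlam` induces the permutation `σ ∈ Tag(r)`: labeling the `∨`'s
of `Wmu` left to right by `0, …, r−1` and following them along the path, the `k`-th `∨` of
`Wmu` ends at the position of the `σ(k)`-th `∨` of `Wlam`. -/
def Induces (r : ℕ) (Wmu Wlam : WDiag) (l : List ℕ) (σ : Equiv.Perm (Fin r)) : Prop :=
  ∃ f : Fin r → ℤ, LPathRel r l (Wmu, fun k => Wmu.nthVee k) (Wlam, f) ∧
    ∀ k : Fin r, f k = Wlam.nthVee (σ k)

end WDiag

/-- The weight diagram of a strictly dominant integral weight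
`λ^ρ = Σ a_i ε_i − Σ b_j δ_j` of `gl(m|n)`:  put `∨` at `t` if `t ∈ {a_i} ∩ {b_j}`,
`×` if `t ∈ {a_i} ∖ {b_j}`, `∘` if `t ∈ {b_j} ∖ {a_i}`, and `∧` otherwise. -/
noncomputable def wdOf {m n : ℕ} (a : Fin m → ℤ) (b : Fin n → ℤ) : WDiag := by
  classical
  refine ⟨fun t => if ∃ i, a i = t then (if ∃ j, b j = t then Tag.vee else Tag.ex)
      else (if ∃ j, b j = t then Tag.circ else Tag.wedge), ?_⟩
  refine Set.Finite.subset ((Set.finite_range a).union (Set.finite_range b)) ?_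
  intro t ht
  by_cases hA : ∃ i, a i = t
  · exact Or.inl (by obtain ⟨i, hi⟩ := hA; exact ⟨i, hi⟩)
  · by_cases hB : ∃ j, b j = t
    · exact Or.inr (by obtain ⟨j, hj⟩ := hB; exact ⟨j, hj⟩)
    · exact absurd (by simp [Set.mem_setOf_eq, hA, hB]) ht

/-! Let `rho W x = x + #{typical positions > x}`, the position of `x` once the typical positions
(`×`, `∘`) are deleted (up to a shift), and `phi W = ∑ rho W x` over the `∨`'s `x` of `W`.
A cap `(p, q)` enclosing `c` `∨`'s also encloses `c` `∧`'s, so the right move along it raises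
`phi` by `1 + 2c`.  Hence a right path from `Wmu` to `Wlam` has length at most
`phi Wlam - phi Wmu`, with equality iff all its caps are empty.

A move along an empty cap keeps the `∨`'s in order and advances one of them by one unit of `rho`.
So on a path of maximal length the move `R_i` occurs exactly
`rho (Wlam.nthVee i) - rho (Wmu.nthVee i)` times, and a weakly decreasing list is determined by
these multiplicities.  A path attaining the bound is built greedily, always moving the rightmost
`∨` that has not reached its place in `Wlam` along an empty cap; this works because right moves
never move the `i`-th `∨` to the left, so each `∨` of `Wmu` starts weakly left of its target. -/

namespace Finset

variable {α : Type*} [LinearOrder α] {k : ℕ}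

theorem orderEmbOfFin_le_iff_lt_card_filter {s : Finset α} (h : s.card = k) (i : Fin k)
    (z : α) : s.orderEmbOfFin h i ≤ z ↔ (i : ℕ) < #{x ∈ s | x ≤ z} := by
  set e := s.orderEmbOfFin h
  have hcard : #{x ∈ s | x ≤ z} = #{j | e j ≤ z} := by
    conv_lhs => rw [← map_orderEmbOfFin_univ s h]
    rw [filter_map, card_map]
    rfl
  rw [hcard]
  constructor
  · intro hi
    calc (i : ℕ) < #(Iic i) := by simp
      _ ≤ #{j | e j ≤ z} := card_le_card fun j hj =>
          mem_filter.2 ⟨mem_univ _, (e.monotone (mem_Iic.1 hj)).trans hi⟩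
  · intro hi
    by_contra! hz
    have : #{j | e j ≤ z} ≤ #(Iio i) := card_le_card fun j hj => mem_Iio.2 <| by
      by_contra! hij
      exact (hz.trans_le (e.monotone hij)).not_ge (mem_filter.1 hj).2
    simp only [Fin.card_Iio] at this
    omega

theorem orderEmbOfFin_le_of_card_filter_le {s t : Finset α} (hs : s.card = k)
    (ht : t.card = k) (h : ∀ z, #{x ∈ t | x ≤ z} ≤ #{x ∈ s | x ≤ z}) (i : Fin k) :
    s.orderEmbOfFin hs i ≤ t.orderEmbOfFin ht i :=
  (orderEmbOfFin_le_iff_lt_card_filter hs i _).2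
    (((orderEmbOfFin_le_iff_lt_card_filter ht i _).1 le_rfl).trans_le (h _))

theorem card_filter_insert_erase_le {s : Finset α} {p q : α} (hp : p ∈ s) (hpq : p ≤ q)
    (z : α) : #{x ∈ insert q (s.erase p) | x ≤ z} ≤ #{x ∈ s | x ≤ z} := by
  rw [filter_insert, filter_erase]
  split_ifs with hqz
  · have hpz : p ∈ {x ∈ s | x ≤ z} := mem_filter.2 ⟨hp, hpq.trans hqz⟩
    calc _ ≤ #(({x ∈ s | x ≤ z}).erase p) + 1 := card_insert_le _ _
      _ = #{x ∈ s | x ≤ z} := card_erase_add_one hpz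
  · exact card_le_card (erase_subset _ _)

theorem orderEmbOfFin_eq_update {s t : Finset α} (hs : s.card = k) (ht : t.card = k)
    {i : Fin k} {q : α} (hst : t = insert q (s.erase (s.orderEmbOfFin hs i)))
    (hiq : s.orderEmbOfFin hs i < q) (hgap : ∀ x ∈ s, s.orderEmbOfFin hs i < x → q < x) :
    ⇑(t.orderEmbOfFin ht) = Function.update (s.orderEmbOfFin hs) i q := by
  subst hst
  set e := s.orderEmbOfFin hs
  refine (orderEmbOfFin_unique ht (fun j => ?_) (fun a b hab => ?_)).symm
  · rcases eq_or_ne j i with rfl | hj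
    · simp
    · rw [Function.update_of_ne hj, mem_insert, mem_erase]
      exact Or.inr ⟨e.injective.ne hj, orderEmbOfFin_mem _ _ _⟩
  · by_cases ha : a = i
    · have hb : b ≠ i := ha ▸ hab.ne'
      rw [ha, Function.update_self, Function.update_of_ne hb]
      exact hgap _ (orderEmbOfFin_mem _ _ _) (ha ▸ e.strictMono hab)
    · rw [Function.update_of_ne ha]
      by_cases hb : b = i
      · rw [hb, Function.update_self]
        exact (e.strictMono (hb ▸ hab)).trans hiq
      · rw [Function.update_of_ne hb]
        exact e.strictMono hab

end Finset

theorem exists_max_lt_of_le_of_ne {α : Type*} [LinearOrder α] {f g : ℕ → α} {r : ℕ}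
    (hle : ∀ j < r, f j ≤ g j) (hne : ∃ j < r, f j ≠ g j) :
    ∃ i < r, f i < g i ∧ ∀ j, i < j → j < r → f j = g j := by
  obtain ⟨i, hiS, himax⟩ := Finset.exists_max_image {j ∈ Finset.range r | f j < g j} id <| by
    obtain ⟨j, hj, hfg⟩ := hne
    exact ⟨j, by simpa [hj] using (hle j hj).lt_of_ne hfg⟩
  obtain ⟨hi, hlt⟩ : i < r ∧ f i < g i := by simpa using hiS
  exact ⟨i, hi, hlt, fun j hij hj =>
    (hle j hj).eq_of_not_lt fun h => (himax j (by simp [hj, h])).not_gt hij⟩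

theorem sum_range_toNat_sub_lt_of_eq_ite {f f' g : ℕ → ℤ} {r i : ℕ} {q : ℤ} (hi : i < r)
    (hf' : ∀ j < r, f' j = if j = i then q else f j) (hfq : f i < q) (hqg : q ≤ g i) :
    ∑ j ∈ Finset.range r, (g j - f' j).toNat < ∑ j ∈ Finset.range r, (g j - f j).toNat := by
  refine Finset.sum_lt_sum (fun j hj => ?_) ⟨i, Finset.mem_range.2 hi, ?_⟩
  · rw [hf' j (Finset.mem_range.1 hj)]
    split_ifs with h
    · subst h
      omega
    · exact le_rfl
  · rw [hf' i hi, if_pos rfl]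
    omega

namespace WDiag

open Finset

variable {W W' E Wlam : WDiag} {p q t : ℤ} {r i j : ℕ} {l l₁ l₂ : List ℕ}

theorem mem_veeFinset : t ∈ W.veeFinset ↔ W.D t = Tag.vee := by
  simp only [veeFinset, mem_filter, Set.Finite.mem_toFinset, Set.mem_ofPred_eq,
    and_iff_right_iff_imp]
  intro h
  simp [h]

theorem nthVee_eq_orderEmbOfFin (hr : W.veeFinset.card = r) (i : Fin r) :
    W.nthVee i = W.veeFinset.orderEmbOfFin hr i := by
  rw [nthVee, List.getD_eq_getElem _ _ (by simp [hr]), orderEmbOfFin_apply]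
  rfl

theorem nthVee_lt_nthVee (hr : W.veeFinset.card = r) (hij : i < j) (hj : j < r) :
    W.nthVee i < W.nthVee j := by
  rw [nthVee_eq_orderEmbOfFin hr ⟨i, hij.trans hj⟩, nthVee_eq_orderEmbOfFin hr ⟨j, hj⟩]
  exact (W.veeFinset.orderEmbOfFin hr).strictMono hij

theorem nthVee_le_nthVee (hr : W.veeFinset.card = r) (hij : i ≤ j) (hj : j < r) :
    W.nthVee i ≤ W.nthVee j := by
  rcases hij.eq_or_lt with rfl | hij
  exacts [le_rfl, (nthVee_lt_nthVee hr hij hj).le]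

theorem nthVee_vee (hi : i < W.veeFinset.card) : W.D (W.nthVee i) = Tag.vee := by
  rw [← mem_veeFinset, nthVee_eq_orderEmbOfFin rfl ⟨i, hi⟩]
  exact orderEmbOfFin_mem _ _ _

theorem exists_nthVee_eq (hr : W.veeFinset.card = r) (ht : W.D t = Tag.vee) :
    ∃ i < r, W.nthVee i = t := by
  have : t ∈ Set.range (W.veeFinset.orderEmbOfFin hr) := by
    rw [range_orderEmbOfFin]
    exact mem_veeFinset.2 ht
  obtain ⟨i, rfl⟩ := this
  exact ⟨i, i.isLt, nthVee_eq_orderEmbOfFin hr i⟩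

theorem veeFinset_moveDiag (hp : W.D p = Tag.vee) (hq : W.D q = Tag.wedge) :
    (W.moveDiag p q).veeFinset = insert q (W.veeFinset.erase p) := by
  have hpq : p ≠ q := by
    rintro rfl
    simp_all
  ext t
  simp only [mem_veeFinset, mem_insert, mem_erase, moveDiag]
  split_ifs with htp htq <;> simp_all

theorem card_veeFinset_moveDiag (hp : W.D p = Tag.vee) (hq : W.D q = Tag.wedge) :
    (W.moveDiag p q).veeFinset.card = W.veeFinset.card := by
  rw [veeFinset_moveDiag hp hq, card_insert_of_notMem (by simp [mem_veeFinset, hq]),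
    card_erase_add_one (mem_veeFinset.2 hp)]

theorem sameTypical_moveDiag (hp : W.D p = Tag.vee) (hq : W.D q = Tag.wedge) :
    SameTypical W (W.moveDiag p q) := by
  intro t
  simp only [moveDiag]
  split_ifs with htp htq <;> simp_all

theorem SameTypical.symm (h : SameTypical W W') : SameTypical W' W :=
  fun t => ⟨(h t).1.symm, (h t).2.symm⟩

theorem SameTypical.trans (h : SameTypical W W') (h' : SameTypical W' E) : SameTypical W E :=
  fun t => ⟨(h t).1.trans (h' t).1, (h t).2.trans (h' t).2⟩

theorem eq_of_veeFinset_eq (hv : W.veeFinset = W'.veeFinset) (ht : SameTypical W W') :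
    W = W' := by
  have hD : ∀ t, W.D t = W'.D t := by
    intro t
    have hvee : W.D t = Tag.vee ↔ W'.D t = Tag.vee := by
      simpa only [mem_veeFinset] using Finset.ext_iff.1 hv t
    obtain ⟨hex, hcirc⟩ := ht t
    revert hvee hex hcirc
    cases W.D t <;> cases W'.D t <;> decide
  obtain ⟨D, _⟩ := W
  obtain ⟨D', _⟩ := W'
  congr 1
  exact funext hD

theorem eq_of_nthVee_eq (hr : W.veeFinset.card = r) (hr' : W'.veeFinset.card = r)
    (ht : SameTypical W W') (h : ∀ j < r, W.nthVee j = W'.nthVee j) : W = W' := by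
  refine eq_of_veeFinset_eq ?_ ht
  rw [← image_orderEmbOfFin_univ _ hr, ← image_orderEmbOfFin_univ _ hr']
  congr 1
  funext j
  rw [← nthVee_eq_orderEmbOfFin, ← nthVee_eq_orderEmbOfFin, h j j.isLt]

noncomputable def typFinset (W : WDiag) : Finset ℤ :=
  W.finite.toFinset.filter fun t => W.D t = Tag.ex ∨ W.D t = Tag.circ

noncomputable def rho (W : WDiag) (x : ℤ) : ℤ := x + #{t ∈ W.typFinset | x < t}

noncomputable def phi (W : WDiag) : ℤ := ∑ x ∈ W.veeFinset, W.rho x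

noncomputable def veeCount (W : WDiag) (p q : ℤ) : ℕ := #{t ∈ Ioo p q | W.D t = Tag.vee}

theorem mem_typFinset : t ∈ W.typFinset ↔ W.D t = Tag.ex ∨ W.D t = Tag.circ := by
  simp only [typFinset, mem_filter, Set.Finite.mem_toFinset, Set.mem_ofPred_eq,
    and_iff_right_iff_imp]
  rintro (h | h) <;> simp [h]

theorem SameTypical.typFinset_eq (h : SameTypical W W') : W.typFinset = W'.typFinset := by
  ext t
  rw [mem_typFinset, mem_typFinset, (h t).1, (h t).2]

theorem SameTypical.rho_eq (h : SameTypical W W') : W.rho = W'.rho := by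
  funext x
  rw [rho, rho, h.typFinset_eq]

theorem card_Ioo_eq_veeCount_add (W : WDiag) (p q : ℤ) :
    #(Ioo p q) = W.veeCount p q + #{t ∈ Ioo p q | W.D t = Tag.wedge} +
      #{t ∈ Ioo p q | t ∈ W.typFinset} := by
  have hnotVee : {t ∈ Ioo p q | ¬W.D t = Tag.vee} =
      {t ∈ Ioo p q | W.D t = Tag.wedge} ∪ {t ∈ Ioo p q | t ∈ W.typFinset} := by
    ext t
    simp only [mem_filter, mem_union, mem_typFinset]
    cases W.D t <;> simp
  rw [veeCount, ← card_filter_add_card_filter_not (fun t => W.D t = Tag.vee), hnotVee,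
    card_union_of_disjoint, add_assoc]
  exact disjoint_filter.2 fun t _ hw ht => by simp_all [mem_typFinset]

theorem rho_eq_of_isCap (h : W.IsCap p q) : W.rho q = W.rho p + 1 + 2 * W.veeCount p q := by
  obtain ⟨-, hq, hpq, hbal, -⟩ := h
  have htyp : {t ∈ W.typFinset | p < t} =
      {t ∈ W.typFinset | q < t} ∪ {t ∈ Ioo p q | t ∈ W.typFinset} := by
    ext t
    simp only [mem_filter, mem_union, mem_Ioo]
    constructor
    · rintro ⟨ht, hpt⟩
      rcases lt_trichotomy q t with hqt | rfl | htq
      · exact Or.inl ⟨ht, hqt⟩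
      · simp [mem_typFinset, hq] at ht
      · exact Or.inr ⟨⟨hpt, htq⟩, ht⟩
    · rintro (⟨ht, hqt⟩ | ⟨⟨hpt, -⟩, ht⟩)
      exacts [⟨ht, hpq.trans hqt⟩, ⟨ht, hpt⟩]
  have hdisj : Disjoint {t ∈ W.typFinset | q < t} {t ∈ Ioo p q | t ∈ W.typFinset} :=
    disjoint_left.2 fun t h₁ h₂ => by simp only [mem_filter, mem_Ioo] at h₁ h₂; omega
  have hIoo := W.card_Ioo_eq_veeCount_add p q
  rw [Int.card_Ioo] at hIoo
  rw [capBal] at hbal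
  rw [rho, rho, htyp, card_union_of_disjoint hdisj, veeCount]
  rw [veeCount] at hIoo
  omega

theorem phi_moveDiag (h : W.IsCap p q) :
    (W.moveDiag p q).phi = W.phi + 1 + 2 * W.veeCount p q := by
  obtain ⟨hp, hq, -⟩ := id h
  have hqW : q ∉ W.veeFinset.erase p := by simp [mem_veeFinset, hq]
  rw [phi, phi, veeFinset_moveDiag hp hq, (sameTypical_moveDiag hp hq).rho_eq.symm,
    sum_insert hqW, ← add_sum_erase _ _ (mem_veeFinset.2 hp), rho_eq_of_isCap h]
  ring

theorem nthVee_le_nthVee_moveDiag (hp : W.D p = Tag.vee) (hq : W.D q = Tag.wedge)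
    (hpq : p < q) (hj : j < W.veeFinset.card) : W.nthVee j ≤ (W.moveDiag p q).nthVee j := by
  have hcard := card_veeFinset_moveDiag hp hq
  rw [nthVee_eq_orderEmbOfFin rfl ⟨j, hj⟩, nthVee_eq_orderEmbOfFin hcard ⟨j, hj⟩]
  refine orderEmbOfFin_le_of_card_filter_le _ _ (fun z => ?_) _
  rw [veeFinset_moveDiag hp hq]
  exact card_filter_insert_erase_le (mem_veeFinset.2 hp) hpq.le z

theorem nthVee_moveDiag_of_veeCount_eq_zero (hr : W.veeFinset.card = r) (hi : i < r)
    (hcap : W.IsCap (W.nthVee i) q) (h0 : W.veeCount (W.nthVee i) q = 0) :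
    (fun j : Fin r => (W.moveDiag (W.nthVee i) q).nthVee j) =
      Function.update (fun j : Fin r => W.nthVee j) ⟨i, hi⟩ q := by
  obtain ⟨hp, hq, hpq, -⟩ := hcap
  have hr' := (card_veeFinset_moveDiag hp hq).trans hr
  have hpi : W.nthVee i = W.veeFinset.orderEmbOfFin hr ⟨i, hi⟩ := nthVee_eq_orderEmbOfFin hr ⟨i, hi⟩
  have hgap : ∀ x ∈ W.veeFinset, W.nthVee i < x → q < x := by
    intro x hx hix
    by_contra! hxq
    rcases hxq.lt_or_eq with hxq | rfl
    · rw [veeCount, card_eq_zero, filter_eq_empty_iff] at h0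
      exact h0 (mem_Ioo.2 ⟨hix, hxq⟩) (mem_veeFinset.1 hx)
    · simp [mem_veeFinset, hq] at hx
  funext j
  simp only [nthVee_eq_orderEmbOfFin hr, nthVee_eq_orderEmbOfFin hr']
  rw [hpi] at hpq hgap
  rw [orderEmbOfFin_eq_update hr hr' (by rw [veeFinset_moveDiag hp hq, hpi]) hpq hgap]

theorem PathRel.forall_lt_card (h : PathRel l W W') : ∀ j ∈ l, j < W.veeFinset.card := by
  induction l generalizing W with
  | nil => simp
  | cons k l ih =>
    obtain ⟨E, ⟨hk, q, hcap, rfl⟩, h⟩ := h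
    simp only [List.mem_cons, forall_eq_or_imp]
    exact ⟨hk, card_veeFinset_moveDiag hcap.1 hcap.2.1 ▸ ih h⟩

theorem PathRel.sameTypical (h : PathRel l W W') : SameTypical W W' := by
  induction l generalizing W with
  | nil => rw [show W = W' from h]; exact fun t => ⟨Iff.rfl, Iff.rfl⟩
  | cons k l ih =>
    obtain ⟨E, ⟨-, q, hcap, rfl⟩, h⟩ := h
    exact (sameTypical_moveDiag hcap.1 hcap.2.1).trans (ih h)

theorem PathRel.nthVee_le (h : PathRel l W W') (hj : j < W.veeFinset.card) :
    W.nthVee j ≤ W'.nthVee j := by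
  induction l generalizing W with
  | nil => rw [show W = W' from h]
  | cons k l ih =>
    obtain ⟨E, ⟨-, q, hcap, rfl⟩, h⟩ := h
    exact (nthVee_le_nthVee_moveDiag hcap.1 hcap.2.1 hcap.2.2.1 hj).trans
      (ih h (by rwa [card_veeFinset_moveDiag hcap.1 hcap.2.1]))

theorem PathRel.phi_add_length_le (h : PathRel l W W') : W.phi + l.length ≤ W'.phi := by
  induction l generalizing W with
  | nil => rw [show W = W' from h]; simp
  | cons k l ih =>
    obtain ⟨E, ⟨-, q, hcap, rfl⟩, h⟩ := h
    have := ih h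
    rw [phi_moveDiag hcap] at this
    push_cast [List.length_cons]
    omega

theorem LPathRel.pathRel {S S' : WDiag × (Fin r → ℤ)} (h : LPathRel r l S S') :
    PathRel l S.1 S'.1 := by
  induction l generalizing S with
  | nil => rw [show S = S' from h]; rfl
  | cons k l ih =>
    obtain ⟨E, ⟨m, q, hm, hk, hcap, hE, -⟩, h⟩ := h
    exact ⟨E.1, ⟨hk, q, hm ▸ hcap, hm ▸ hE⟩, ih h⟩

theorem isCap_of_forall_mem_typFinset (hp : W.D p = Tag.vee) (hq : W.D q = Tag.wedge)
    (hpq : p < q) (htyp : ∀ t ∈ Ioo p q, t ∈ W.typFinset) :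
    W.IsCap p q ∧ W.veeCount p q = 0 := by
  have hnone : ∀ tag, tag = Tag.vee ∨ tag = Tag.wedge → {t ∈ Ioo p q | W.D t = tag} = ∅ := by
    refine fun tag htag => filter_eq_empty_iff.2 fun t ht htag' => ?_
    have := mem_typFinset.1 (htyp t ht)
    rcases htag with rfl | rfl <;> simp_all
  refine ⟨⟨hp, hq, hpq, ?_, fun q' hpq' hq'q hq' _ => ?_⟩, ?_⟩
  · rw [capBal, hnone _ (.inl rfl), hnone _ (.inr rfl)]
  · have := mem_typFinset.1 (htyp q' (mem_Ioo.2 ⟨hpq', hq'q⟩))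
    simp_all
  · rw [veeCount, hnone _ (.inl rfl), card_empty]

theorem PathRel.count_eq (h : PathRel l W Wlam) (htight : W.phi + l.length = Wlam.phi)
    (hi : i < W.veeFinset.card) :
    (l.count i : ℤ) = Wlam.rho (Wlam.nthVee i) - Wlam.rho (W.nthVee i) := by
  induction l generalizing W with
  | nil => rw [show W = Wlam from h]; simp
  | cons k l ih =>
    have hrho : W.rho = Wlam.rho := h.sameTypical.rho_eq
    obtain ⟨E, ⟨hk, q, hcap, rfl⟩, h⟩ := h
    have hphi := phi_moveDiag hcap
    have hle := h.phi_add_length_le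
    push_cast [List.length_cons] at htight
    have h0 : W.veeCount (W.nthVee k) q = 0 := by omega
    have hcard := card_veeFinset_moveDiag hcap.1 hcap.2.1
    have hE := congrFun (nthVee_moveDiag_of_veeCount_eq_zero rfl hk hcap h0) ⟨i, hi⟩
    rw [List.count_cons, Nat.cast_add, ih h (by omega) (hcard ▸ hi), hE]
    by_cases hik : i = k
    · subst hik
      have := rho_eq_of_isCap hcap
      rw [h0, Nat.cast_zero, mul_zero, add_zero, hrho] at this
      rw [Function.update_self, this]
      simp only [BEq.rfl, if_true, Nat.cast_one]
      ring
    · have hne : (⟨i, hi⟩ : Fin _) ≠ ⟨k, hk⟩ := by simpa using hik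
      simp [Function.update_of_ne hne, Ne.symm hik]

theorem eq_of_isRightPath_of_tight (h₁ : IsRightPath W Wlam l₁) (h₂ : IsRightPath W Wlam l₂)
    (ht₁ : W.phi + l₁.length = Wlam.phi) (ht₂ : W.phi + l₂.length = Wlam.phi) : l₁ = l₂ := by
  refine List.Perm.eq_of_sortedGE h₁.1.sortedGE h₂.1.sortedGE (List.perm_iff_count.2 fun i => ?_)
  by_cases hi : i < W.veeFinset.card
  · exact_mod_cast (h₁.2.count_eq ht₁ hi).trans (h₂.2.count_eq ht₂ hi).symm
  · rw [List.count_eq_zero_of_not_mem fun h => hi (h₁.2.forall_lt_card i h),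
      List.count_eq_zero_of_not_mem fun h => hi (h₂.2.forall_lt_card i h)]

theorem exists_isCap_of_lt_nthVee (hr : W.veeFinset.card = r)
    (hlam : Wlam.veeFinset.card = r) (hst : SameTypical W Wlam) (hi : i < r)
    (hlt : W.nthVee i < Wlam.nthVee i)
    (hfix : ∀ j, i < j → j < r → W.nthVee j = Wlam.nthVee j) :
    ∃ q ≤ Wlam.nthVee i, W.IsCap (W.nthVee i) q ∧ W.veeCount (W.nthVee i) q = 0 := by
  set T := {t ∈ Ioc (W.nthVee i) (Wlam.nthVee i) | t ∉ W.typFinset}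
  have hT : T.Nonempty := ⟨Wlam.nthVee i, mem_filter.2 ⟨mem_Ioc.2 ⟨hlt, le_rfl⟩, by
    rw [hst.typFinset_eq, mem_typFinset, nthVee_vee (hlam ▸ hi)]
    simp⟩⟩
  obtain ⟨hqI, hqtyp⟩ := mem_filter.1 (T.min'_mem hT)
  set q := T.min' hT
  obtain ⟨hpq, hqlam⟩ := mem_Ioc.1 hqI
  have htyp : ∀ t ∈ Ioo (W.nthVee i) q, t ∈ W.typFinset := fun t ht => by
    by_contra h
    obtain ⟨h₁, h₂⟩ := mem_Ioo.1 ht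
    exact (T.min'_le t (mem_filter.2 ⟨mem_Ioc.2 ⟨h₁, h₂.le.trans hqlam⟩, h⟩)).not_gt h₂
  have hnotVee : W.D q ≠ Tag.vee := by
    intro hv
    obtain ⟨a, ha, haq⟩ := exists_nthVee_eq hr hv
    rw [← haq] at hpq hqlam
    rcases le_or_gt a i with hai | hia
    · exact hpq.not_ge (nthVee_le_nthVee hr hai hi)
    · exact hqlam.not_gt (hfix a hia ha ▸ nthVee_lt_nthVee hlam hia ha)
  have hq : W.D q = Tag.wedge := by
    rw [mem_typFinset] at hqtyp
    cases h : W.D q <;> simp_all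
  exact ⟨q, hqlam, isCap_of_forall_mem_typFinset (nthVee_vee (hr ▸ hi)) hq hpq htyp⟩

theorem exists_tight_lPathRel (hlam : Wlam.veeFinset.card = r) (n : ℕ) :
    ∀ W : WDiag, W.veeFinset.card = r → SameTypical W Wlam →
      (∀ j < r, W.nthVee j ≤ Wlam.nthVee j) →
      ∑ j ∈ range r, (Wlam.nthVee j - W.nthVee j).toNat = n →
      ∃ l : List ℕ, l.IsChain (fun a b => b ≤ a) ∧
        LPathRel r l (W, fun k => W.nthVee k) (Wlam, fun k => Wlam.nthVee k) ∧
        W.phi + l.length = Wlam.phi ∧ ∀ j ∈ l, W.nthVee j < Wlam.nthVee j := by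
  induction n using Nat.strong_induction_on with
  | _ n ih =>
  intro W hr hst hdom hn
  by_cases hdone : ∀ j < r, W.nthVee j = Wlam.nthVee j
  · obtain rfl := eq_of_nthVee_eq hr hlam hst hdone
    exact ⟨[], .nil, rfl, by simp, by simp⟩
  push Not at hdone
  obtain ⟨i, hi, hlt, hfix⟩ := exists_max_lt_of_le_of_ne hdom hdone
  obtain ⟨q, hqlam, hcap, h0⟩ := exists_isCap_of_lt_nthVee hr hlam hst hi hlt hfix
  set E := W.moveDiag (W.nthVee i) q
  have hEr : E.veeFinset.card = r := (card_veeFinset_moveDiag hcap.1 hcap.2.1).trans hr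
  have hvees := nthVee_moveDiag_of_veeCount_eq_zero hr hi hcap h0
  have hEj : ∀ j < r, E.nthVee j = if j = i then q else W.nthVee j := fun j hj => by
    simpa [Function.update_apply, Fin.ext_iff] using congrFun hvees ⟨j, hj⟩
  have hEdom : ∀ j < r, E.nthVee j ≤ Wlam.nthVee j := fun j hj => by
    rw [hEj j hj]
    split_ifs with h
    exacts [h ▸ hqlam, hdom j hj]
  obtain ⟨l, hchain, hlpath, htight, hmoved⟩ :=
    ih _ (hn ▸ sum_range_toNat_sub_lt_of_eq_ite hi hEj hcap.2.2.1 hqlam) E hEr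
      ((sameTypical_moveDiag hcap.1 hcap.2.1).symm.trans hst) hEdom rfl
  have hmovedW : ∀ j ∈ l, j ≠ i → j < r ∧ W.nthVee j < Wlam.nthVee j := fun j hj hji => by
    have hjr : j < r := hEr ▸ hlpath.pathRel.forall_lt_card j hj
    simpa [hEj j hjr, hji, hjr] using hmoved j hj
  refine ⟨i :: l, List.isChain_cons.2 ⟨fun j hj => ?_, hchain⟩,
    ⟨(E, fun k => E.nthVee k), ⟨⟨i, hi⟩, q, rfl, hr ▸ hi, hcap, rfl, hvees⟩, hlpath⟩, ?_, ?_⟩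
  · by_contra! hij
    obtain ⟨hjr, hjlt⟩ := hmovedW j (List.mem_of_mem_head? hj) hij.ne'
    exact hjlt.ne (hfix j hij hjr)
  · rw [phi_moveDiag hcap, h0] at htight
    push_cast [List.length_cons] at htight ⊢
    omega
  · intro j hj
    rcases List.mem_cons.1 hj with rfl | hj
    · exact hlt
    · by_cases hji : j = i
      exacts [hji ▸ hlt, (hmovedW j hj hji).2]

end WDiag

open WDiag in
theorem stmt8 (r : ℕ) (Wmu Wlam : WDiag)
    (hmu : Wmu.veeFinset.card = r) (hlam : Wlam.veeFinset.card = r)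
    (hex : ∃ l : List ℕ, WDiag.IsRightPath Wmu Wlam l) :
    ∃ l : List ℕ,
      (WDiag.IsRightPath Wmu Wlam l ∧
        (∀ l' : List ℕ, WDiag.IsRightPath Wmu Wlam l' → l'.length ≤ l.length) ∧
        WDiag.Induces r Wmu Wlam l 1) ∧
      ∀ l' : List ℕ,
        (WDiag.IsRightPath Wmu Wlam l' ∧
          ∀ l'' : List ℕ, WDiag.IsRightPath Wmu Wlam l'' → l''.length ≤ l'.length) →
        l' = l := by
  obtain ⟨_, -, hpath⟩ := hex
  obtain ⟨l₀, hchain₀, hlpath₀, htight₀, -⟩ := exists_tight_lPathRel hlam _ Wmu hmu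
    hpath.sameTypical (fun j hj => hpath.nthVee_le (hmu ▸ hj)) rfl
  have hright₀ : IsRightPath Wmu Wlam l₀ := ⟨hchain₀, hlpath₀.pathRel⟩
  have hmax : ∀ l', IsRightPath Wmu Wlam l' → l'.length ≤ l₀.length := fun l' h' => by
    have := h'.2.phi_add_length_le
    omega
  refine ⟨l₀, ⟨hright₀, hmax, _, hlpath₀, fun _ => rfl⟩, fun l' ⟨h', hmax'⟩ => ?_⟩
  have hlen : l'.length = l₀.length := (hmax l' h').antisymm (hmax' l₀ hright₀)
  exact eq_of_isRightPath_of_tight h' hright₀ (by rw [hlen]; exact htight₀) htight₀
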